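/- Consider the weighted bipartite instance with facilities f_1, f_2, f_3, f_4 and two clients a, b, where d(f_1,a) = d(f_1,b) = d(f_2,a) = d(f_2,b) = c and d(f_3,a) = d(f_3,b) = d(f_4,a) = d(f_4,b) = 1, for a constant c > 1. Facility colors: f_1 ∈ F_r ∩ F_b, f_2 ∈ F_g ∩ F_y, f_3 ∈ F_r ∩ F_y, f_4 ∈ F_g ∩ F_b, with thresholds r_r = r_g = r_b = r_y = 1 and k = 2. Then: (i) S = {f_1, f_2} and S* = {f_3, f_4} are the only feasible solutions of size 2; (ii) no single swap from S (replacing one facility of S by one facility not in S) yields a feasible solution; (iii) cost(S)/cost(S*) = c. Hence single-swap local search starting at S is stuck at a feasible solution whose cost is c times the optimum, for arbitrarily large c. -/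

import Mathlib

/-- Distances in the bad example for single-swap local search: facilities `0,1`
(= f₁,f₂) are at distance `c` from both clients, facilities `2,3` (= f₃,f₄)
are at distance `1`. -/
noncomputable def dist9 (c : ℝ) : Fin 4 → Fin 2 → ℝ := fun f _ => if (f : ℕ) < 2 then c else 1

/-- Connection cost of a center set `S`. -/
noncomputable def cost9 (c : ℝ) (S : Finset (Fin 4)) : ℝ :=
  ∑ v : Fin 2, sInf ((fun f => dist9 c f v) '' ↑S)

/-- Feasibility: at least one center from each of the groups
`F_r = {f₁,f₃} = {0,2}`, `F_g = {f₂,f₄} = {1,3}`, `F_b = {f₁,f₄} = {0,3}`,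
`F_y = {f₂,f₃} = {1,2}`. -/
def feas9 (S : Finset (Fin 4)) : Prop :=
  1 ≤ (S ∩ ({0, 2} : Finset (Fin 4))).card ∧
  1 ≤ (S ∩ ({1, 3} : Finset (Fin 4))).card ∧
  1 ≤ (S ∩ ({0, 3} : Finset (Fin 4))).card ∧
  1 ≤ (S ∩ ({1, 2} : Finset (Fin 4))).card

/-! Each facility lies in exactly two of the four groups, and only the complementary pairs
`{f₁, f₂}` and `{f₃, f₄}` meet all four. A single swap from `{f₁, f₂}` produces a pair that
mixes the two, so it is infeasible. Every client is at distance `c` from `f₁, f₂` and at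
distance `1` from `f₃, f₄`, which gives the cost ratio `c`. -/

lemma feas9_pair : feas9 {0, 1} := by
  unfold feas9; decide

lemma feas9_pair_opt : feas9 {2, 3} := by
  unfold feas9; decide

lemma eq_pair_or_eq_pair_opt_of_feas9 {S : Finset (Fin 4)} (hcard : S.card = 2)
    (hS : feas9 S) : S = {0, 1} ∨ S = {2, 3} := by
  revert S; unfold feas9; decide

lemma not_feas9_swap_pair {s s' : Fin 4} (hs : s ∈ ({0, 1} : Finset (Fin 4)))
    (hs' : s' ∉ ({0, 1} : Finset (Fin 4))) :
    ¬ feas9 (insert s' (({0, 1} : Finset (Fin 4)).erase s)) := by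
  intro hfeas
  obtain ⟨t, hts, hkeep⟩ :
      ∃ t ∈ ({0, 1} : Finset (Fin 4)), t ∈ ({0, 1} : Finset (Fin 4)).erase s := by
    fin_cases hs
    exacts [⟨1, by simp, by simp⟩, ⟨0, by simp, by simp⟩]
  have hcard : (insert s' (({0, 1} : Finset (Fin 4)).erase s)).card = 2 := by
    rw [Finset.card_insert_of_notMem (fun h => hs' (Finset.mem_of_mem_erase h)),
      Finset.card_erase_of_mem hs]
    rfl
  rcases eq_pair_or_eq_pair_opt_of_feas9 hcard hfeas with h | h
  · exact hs' (h ▸ Finset.mem_insert_self _ _)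
  · have : t ∈ ({2, 3} : Finset (Fin 4)) := h ▸ Finset.mem_insert_of_mem hkeep
    fin_cases hts <;> simp at this

lemma cost9_eq_of_forall_dist9_eq {c a : ℝ} {S : Finset (Fin 4)} (hS : S.Nonempty)
    (hd : ∀ f ∈ S, ∀ v, dist9 c f v = a) : cost9 c S = 2 * a := by
  have himage : ∀ v, (fun f => dist9 c f v) '' ↑S = {a} := fun v => by
    rw [Set.image_congr (fun f hf => hd f hf v), (Finset.coe_nonempty.mpr hS).image_const]
  simp only [cost9, himage, csInf_singleton, Fin.sum_univ_two]
  ring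

lemma cost9_pair (c : ℝ) : cost9 c {0, 1} = 2 * c :=
  cost9_eq_of_forall_dist9_eq (by simp) (by simp [dist9])

lemma cost9_pair_opt (c : ℝ) : cost9 c {2, 3} = 2 :=
  (cost9_eq_of_forall_dist9_eq (by simp) fun f hf _ => by
    fin_cases hf <;> rfl).trans (mul_one 2)

theorem stmt_9_general (c : ℝ) :
    (∀ S : Finset (Fin 4), S.card = 2 → feas9 S →
      S = ({0, 1} : Finset (Fin 4)) ∨ S = ({2, 3} : Finset (Fin 4))) ∧
    feas9 ({0, 1} : Finset (Fin 4)) ∧ feas9 ({2, 3} : Finset (Fin 4)) ∧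
    (∀ s ∈ ({0, 1} : Finset (Fin 4)), ∀ s' : Fin 4,
      s' ∉ ({0, 1} : Finset (Fin 4)) →
      ¬ feas9 (insert s' (({0, 1} : Finset (Fin 4)).erase s))) ∧
    cost9 c ({0, 1} : Finset (Fin 4)) = c * cost9 c ({2, 3} : Finset (Fin 4)) := by
  refine ⟨fun _ => eq_pair_or_eq_pair_opt_of_feas9, feas9_pair, feas9_pair_opt,
    fun _ hs _ hs' => not_feas9_swap_pair hs hs', ?_⟩
  rw [cost9_pair, cost9_pair_opt, mul_comm]

/-- In the example: (i) `{f₁,f₂}` and `{f₃,f₄}` are the only feasible solutions of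
size `2`; (ii) no single swap from `{f₁,f₂}` yields a feasible set; (iii)
`cost {f₁,f₂} = c ⬝ cost {f₃,f₄}`. Hence single-swap local search is stuck at a
solution whose cost is `c` times the optimum. -/
theorem stmt_9 (c : ℝ) (hc : 1 < c) :
    (∀ S : Finset (Fin 4), S.card = 2 → feas9 S →
      S = ({0, 1} : Finset (Fin 4)) ∨ S = ({2, 3} : Finset (Fin 4))) ∧
    feas9 ({0, 1} : Finset (Fin 4)) ∧ feas9 ({2, 3} : Finset (Fin 4)) ∧
    (∀ s ∈ ({0, 1} : Finset (Fin 4)), ∀ s' : Fin 4,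
      s' ∉ ({0, 1} : Finset (Fin 4)) →
      ¬ feas9 (insert s' (({0, 1} : Finset (Fin 4)).erase s))) ∧
    cost9 c ({0, 1} : Finset (Fin 4)) = c * cost9 c ({2, 3} : Finset (Fin 4)) :=
  stmt_9_general c
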